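/- arXiv:2011.06229 — 3 statements merged into one kernel-verified Lean document; each statement's English description precedes it below -/
import Mathlib

section
/- Suppose |b_{jk} − b_{jl}| ≥ γ_j |k − l| for all k,l, with γ_j > 0. Then for every sufficiently large j, every eigenvalue λ of the m_j × m_j covariance matrix C_j with entries (C_j)_{kl} = a_j ∫_ℝ cos((b_{jk}−b_{jl})ξ) |ψ̂(a_jξ)|² f(ξ) dξ satisfies λ ≤ c₃ (1 + 2 a_j (1 + log(m_j)) / γ_j ), where c₃ is a finite constant not depending on j, k, l. -/
open MeasureTheory Filter Topology

lemma harm_sum_aux (n : ℕ) (k : Fin n) :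
    ∑ l ∈ Finset.univ.erase k, (|(k.val : ℝ) - (l.val : ℝ)|)⁻¹
      ≤ 2 * (1 + Real.log n) := by
  have hlog : (harmonic n : ℝ) ≤ 1 + Real.log n := harmonic_le_one_add_log n
  have hharm : (harmonic n : ℝ) = ∑ d ∈ Finset.Icc 1 n, (d : ℝ)⁻¹ := by
    rw [harmonic_eq_sum_Icc]; push_cast; ring
  have half : ∀ s : Finset (Fin n), ∀ i : Fin n → ℕ,
      (∀ l ∈ s, (i l : ℝ) = |(k.val : ℝ) - (l.val : ℝ)|) →
      (∀ l ∈ s, i l ∈ Finset.Icc 1 n) →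
      (Set.InjOn i s) →
      ∑ l ∈ s, (|(k.val : ℝ) - (l.val : ℝ)|)⁻¹ ≤ 1 + Real.log n := by
    intro s i hval hmem hinj
    calc ∑ l ∈ s, (|(k.val : ℝ) - (l.val : ℝ)|)⁻¹
        = ∑ l ∈ s, ((i l : ℝ))⁻¹ := by
          refine Finset.sum_congr rfl fun l hl => by rw [hval l hl]
      _ = ∑ d ∈ s.image i, (d : ℝ)⁻¹ :=
          (Finset.sum_image (f := fun d : ℕ => (d : ℝ)⁻¹)
            fun x hx y hy => hinj hx hy).symm
      _ ≤ ∑ d ∈ Finset.Icc 1 n, (d : ℝ)⁻¹ := by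
          refine Finset.sum_le_sum_of_subset_of_nonneg ?_ (fun d _ _ => by positivity)
          intro d hd
          obtain ⟨l, hl, rfl⟩ := Finset.mem_image.mp hd
          exact hmem l hl
      _ = (harmonic n : ℝ) := hharm.symm
      _ ≤ 1 + Real.log n := hlog
  have hsplit : Finset.univ.erase k =
      (Finset.univ.filter (fun l : Fin n => l.val < k.val)) ∪
      (Finset.univ.filter (fun l : Fin n => k.val < l.val)) := by
    ext l
    simp only [Finset.mem_erase, Finset.mem_union, Finset.mem_filter, Finset.mem_univ,
      true_and, and_true, ne_eq, Fin.ext_iff]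
    omega
  have hdisj : Disjoint (Finset.univ.filter (fun l : Fin n => l.val < k.val))
      (Finset.univ.filter (fun l : Fin n => k.val < l.val)) := by
    rw [Finset.disjoint_left]
    intro l h1 h2
    simp only [Finset.mem_filter] at h1 h2
    omega
  rw [hsplit, Finset.sum_union hdisj]
  have hn : k.val < n := k.isLt
  have b1 : ∑ l ∈ Finset.univ.filter (fun l : Fin n => l.val < k.val),
      (|(k.val : ℝ) - (l.val : ℝ)|)⁻¹ ≤ 1 + Real.log n := by
    refine half _ (fun l => k.val - l.val) ?_ ?_ ?_
    · intro l hl; simp only [Finset.mem_filter] at hl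
      have hc : (l.val : ℝ) < k.val := Nat.cast_lt.mpr hl.2
      rw [abs_of_pos (by linarith)]
      push_cast [Nat.cast_sub (le_of_lt hl.2)]; ring
    · intro l hl; simp only [Finset.mem_filter] at hl
      simp only [Finset.mem_Icc]; omega
    · intro x hx y hy hxy
      simp only [Finset.coe_filter, Set.mem_setOf_eq] at hx hy
      dsimp only at hxy
      exact Fin.ext (by omega)
  have b2 : ∑ l ∈ Finset.univ.filter (fun l : Fin n => k.val < l.val),
      (|(k.val : ℝ) - (l.val : ℝ)|)⁻¹ ≤ 1 + Real.log n := by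
    refine half _ (fun l => l.val - k.val) ?_ ?_ ?_
    · intro l hl; simp only [Finset.mem_filter] at hl
      have hc : (k.val : ℝ) < l.val := Nat.cast_lt.mpr hl.2
      rw [abs_sub_comm, abs_of_pos (by linarith)]
      push_cast [Nat.cast_sub (le_of_lt hl.2)]; ring
    · intro l hl; simp only [Finset.mem_filter] at hl
      simp only [Finset.mem_Icc]; omega
    · intro x hx y hy hxy
      simp only [Finset.coe_filter, Set.mem_setOf_eq] at hx hy
      dsimp only at hxy
      exact Fin.ext (by omega)
  linarith

/-- Bound on the eigenvalues of the covariance matrix of the filter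
coefficients: if `|b_{jk} − b_{jl}| ≥ γ_j |k−l|`, then for all sufficiently
large `j` every eigenvalue `lam` of the `m_j × m_j` covariance matrix
`(C_j)_{kl} = a_j ∫ cos((b_{jk}−b_{jl})ξ)|ψ̂(a_jξ)|² f(ξ) dξ` satisfies
`lam ≤ c₃(1 + 2 a_j (1 + log m_j)/γ_j)`, where `c₃` is the constant from the
covariance bound of Lemma 3.3. -/
theorem eigenvalue_bound_of_covariance_matrix
    (A s₀ α : ℝ) (hA : 0 < A) (hs₀ : 1 < s₀) (hα : α ∈ Set.Ioo (0:ℝ) (1/2))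
    (h : ℝ → ℝ) (hEven : ∀ x, h (-x) = h x) (hNonneg : ∀ x, 0 ≤ h x)
    (hBdd : ∃ C : ℝ, ∀ x, h x ≤ C) (hSmooth : ContDiff ℝ 4 h)
    (h0 : h 0 = 1) (hder0 : ∀ i ∈ Finset.Icc 1 4, iteratedDeriv i h 0 = 0)
    (ψ : ℝ → ℝ) (hψ : Integrable ψ)
    (psiHat : ℝ → ℝ)
    (hFour : ∀ l : ℝ, (psiHat l : ℂ) =
      ∫ t : ℝ, Complex.exp (-(l * t) * Complex.I) * (ψ t : ℂ))
    (hSupp : ∀ l : ℝ, psiHat l ≠ 0 → l ∈ Set.Icc (-A) A)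
    (hBV : BoundedVariationOn psiHat (Set.Icc (-A) A))
    (a : ℕ → ℝ) (hapos : ∀ j, 0 < a j) (haMono : StrictMono a)
    (haTop : Tendsto a atTop atTop)
    (m : ℕ → ℕ) (hmpos : ∀ j, 0 < m j) (hmMono : Monotone m)
    (hmTop : Tendsto m atTop atTop)
    (b : ℕ → ℤ → ℝ) (γ : ℕ → ℝ) (hγ : ∀ j, 0 < γ j)
    (hb : ∀ j : ℕ, ∀ k l : ℤ, γ j * |(k : ℝ) - (l : ℝ)| ≤ |b j k - b j l|)
    (c₃ : ℝ) (hc₃ : 0 < c₃)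
    (hc₃bound : ∀ aa : ℝ, 2 * A ≤ aa → ∀ t : ℝ,
      |aa * ∫ ξ : ℝ, Real.cos (t * ξ) * psiHat (aa * ξ) ^ 2 *
          (h ξ / |ξ ^ 2 - s₀ ^ 2| ^ (2 * α))| ≤
        c₃ * (if t = 0 then 1 else aa * |t|⁻¹)) :
    ∀ᶠ j in atTop, ∀ lam : ℝ, ∀ v : Fin (m j) → ℝ, v ≠ 0 →
      (Matrix.of fun k l : Fin (m j) =>
          a j * ∫ ξ : ℝ, Real.cos ((b j ((k : ℕ) + 1 : ℤ) - b j ((l : ℕ) + 1 : ℤ)) * ξ) *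
            psiHat (a j * ξ) ^ 2 * (h ξ / |ξ ^ 2 - s₀ ^ 2| ^ (2 * α))).mulVec v
        = lam • v →
      lam ≤ c₃ * (1 + 2 * a j * (1 + Real.log (m j)) / γ j) := by
  
  have hEv : ∀ᶠ j in atTop, 2 * A ≤ a j := haTop.eventually_ge_atTop (2 * A)
  filter_upwards [hEv] with j haj
  intro lam v hv hEig
  set C : Matrix (Fin (m j)) (Fin (m j)) ℝ := Matrix.of fun k l : Fin (m j) =>
      a j * ∫ ξ : ℝ, Real.cos ((b j ((k : ℕ) + 1 : ℤ) - b j ((l : ℕ) + 1 : ℤ)) * ξ) *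
        psiHat (a j * ξ) ^ 2 * (h ξ / |ξ ^ 2 - s₀ ^ 2| ^ (2 * α)) with hC
  have hγj := hγ j
  have haposj := hapos j
  have hlogn : 0 ≤ Real.log (m j) := Real.log_natCast_nonneg (m j)
  -- entry bounds
  have keydiag : ∀ k : Fin (m j), |C k k| ≤ c₃ := by
    intro k
    have := hc₃bound (a j) haj (b j ((k : ℕ) + 1 : ℤ) - b j ((k : ℕ) + 1 : ℤ))
    simpa [hC, sub_self] using this
  have keyoff : ∀ k l : Fin (m j), k ≠ l →
      |C k l| ≤ c₃ * a j * (γ j)⁻¹ * (|((k : ℕ) : ℝ) - ((l : ℕ) : ℝ)|)⁻¹ := by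
    intro k l hkl
    set t := b j ((k : ℕ) + 1 : ℤ) - b j ((l : ℕ) + 1 : ℤ) with ht
    have hdist : γ j * |((k : ℕ) : ℝ) - ((l : ℕ) : ℝ)| ≤ |t| := by
      have := hb j ((k : ℕ) + 1 : ℤ) ((l : ℕ) + 1 : ℤ)
      rw [ht]
      convert this using 3
      push_cast
      ring
    have hklpos : 0 < |((k : ℕ) : ℝ) - ((l : ℕ) : ℝ)| := by
      rw [abs_pos, sub_ne_zero]
      exact fun hcast => hkl (Fin.ext (Nat.cast_injective hcast))
    have htne : t ≠ 0 := by
      intro ht0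
      rw [ht0, abs_zero] at hdist
      nlinarith
    have hbound := hc₃bound (a j) haj t
    rw [if_neg htne] at hbound
    have h1 : |C k l| ≤ c₃ * (a j * |t|⁻¹) := by
      simpa [hC, ht] using hbound
    refine h1.trans ?_
    have hinv : |t|⁻¹ ≤ (γ j * |((k : ℕ) : ℝ) - ((l : ℕ) : ℝ)|)⁻¹ := by
      apply inv_anti₀ (by positivity) hdist
    calc c₃ * (a j * |t|⁻¹)
        ≤ c₃ * (a j * (γ j * |((k : ℕ) : ℝ) - ((l : ℕ) : ℝ)|)⁻¹) := by
          apply mul_le_mul_of_nonneg_left _ hc₃.le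
          exact mul_le_mul_of_nonneg_left hinv haposj.le
      _ = c₃ * a j * (γ j)⁻¹ * (|((k : ℕ) : ℝ) - ((l : ℕ) : ℝ)|)⁻¹ := by
          rw [mul_inv]; ring
  -- pick maximizing index
  have hne : (Finset.univ : Finset (Fin (m j))).Nonempty := by
    refine ⟨⟨0, ?_⟩, Finset.mem_univ _⟩
    exact hmpos j
  obtain ⟨k₀, -, hk₀⟩ := Finset.exists_max_image Finset.univ (fun k => |v k|) hne
  have hvk₀ : 0 < |v k₀| := by
    rcases Function.ne_iff.mp hv with ⟨l, hl⟩
    exact lt_of_lt_of_le (abs_pos.mpr hl) (hk₀ l (Finset.mem_univ l))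
  have hrow : lam * |v k₀| ≤ (∑ l, |C k₀ l|) * |v k₀| := by
    have heq : ∑ l, C k₀ l * v l = lam * v k₀ := by
      have := congrFun hEig k₀
      simpa [Matrix.mulVec, dotProduct] using this
    calc lam * |v k₀| ≤ |lam * v k₀| := by
          rw [abs_mul]
          exact mul_le_mul_of_nonneg_right (le_abs_self lam) (abs_nonneg _)
      _ = |∑ l, C k₀ l * v l| := by rw [heq]
      _ ≤ ∑ l, |C k₀ l * v l| := Finset.abs_sum_le_sum_abs _ _
      _ ≤ ∑ l, |C k₀ l| * |v k₀| := by
          refine Finset.sum_le_sum fun l _ => ?_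
          rw [abs_mul]
          exact mul_le_mul_of_nonneg_left (hk₀ l (Finset.mem_univ l)) (abs_nonneg _)
      _ = (∑ l, |C k₀ l|) * |v k₀| := (Finset.sum_mul _ _ _).symm
  have hlam : lam ≤ ∑ l, |C k₀ l| := le_of_mul_le_mul_right hrow hvk₀
  refine hlam.trans ?_
  have hsum : ∑ l, |C k₀ l| = |C k₀ k₀| + ∑ l ∈ Finset.univ.erase k₀, |C k₀ l| :=
    (Finset.add_sum_erase _ _ (Finset.mem_univ k₀)).symm
  have hoff : ∑ l ∈ Finset.univ.erase k₀, |C k₀ l|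
      ≤ c₃ * a j * (γ j)⁻¹ * (2 * (1 + Real.log (m j))) := by
    calc ∑ l ∈ Finset.univ.erase k₀, |C k₀ l|
        ≤ ∑ l ∈ Finset.univ.erase k₀,
            c₃ * a j * (γ j)⁻¹ * (|((k₀ : ℕ) : ℝ) - ((l : ℕ) : ℝ)|)⁻¹ := by
          refine Finset.sum_le_sum fun l hl => ?_
          exact keyoff k₀ l (Finset.ne_of_mem_erase hl).symm
      _ = c₃ * a j * (γ j)⁻¹ *
            ∑ l ∈ Finset.univ.erase k₀, (|((k₀ : ℕ) : ℝ) - ((l : ℕ) : ℝ)|)⁻¹ := by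
          rw [Finset.mul_sum]
      _ ≤ c₃ * a j * (γ j)⁻¹ * (2 * (1 + Real.log (m j))) := by
          refine mul_le_mul_of_nonneg_left (harm_sum_aux (m j) k₀) (by positivity)
  have : ∑ l, |C k₀ l| ≤ c₃ + c₃ * a j * (γ j)⁻¹ * (2 * (1 + Real.log (m j))) := by
    rw [hsum]; exact add_le_add (keydiag k₀) hoff
  refine this.trans (le_of_eq ?_)
  field_simp
end

section
/- Suppose a_{j+1}/a_j ≥ A/B > 1 for all j ≥ j₀ and m_j a_j^{−4} → 0 as j → ∞. Then lim_{j→∞} √m_j ( (I₀(a_{j+1}^{−1}) − I₀(a_{j+2}^{−1})) / (a_{j+1}^{−2} − a_{j+2}^{−2}) − 2α s₀^{−4α−2} ∫_ℝ η² |ψ̂(η)|² dη ) = 0, where I₀(x) := ∫_ℝ |ψ̂(η)|² h(xη)/(s₀² − x²η²)^{2α} dη. -/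
/-!
Near `0`, `h u = 1 + O(u⁴)` because `h - 1` vanishes to fourth order, and
`(s₀² - u²)^(-2α) = s₀^(-4α) + 2α s₀^(-4α-2) u² + O(u⁴)`. Both remainders come from the
second-order mean value estimate, which for `h` is applied twice: to `h''`, then to `h`.
Integrating against the weight `ψ̂²`, continuous as the Fourier transform of an `L¹` function
and supported in `[-A, A]`, gives `I₀(x) = c₀ + D x² + O(x⁴)` with
`D = 2α s₀^(-4α-2) ∫ η² ψ̂²`. The ratio condition makes
`a_{j+1}⁻² - a_{j+2}⁻² ≥ (1 - (B/A)²) a_{j+1}⁻²`, so the difference quotient is `D + O(a_j⁻²)`,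
and `√m_j a_j⁻² = √(m_j a_j⁻⁴) → 0`.
-/

open MeasureTheory Filter Topology Set

theorem Convex.abs_sub_le_mul_abs_of_hasDerivAt {s : Set ℝ} (hs : Convex ℝ s) (h0 : 0 ∈ s)
    {f f' : ℝ → ℝ} {C : ℝ} (hf : ∀ x ∈ s, HasDerivAt f (f' x) x) (hC : ∀ x ∈ s, |f' x| ≤ C)
    {x : ℝ} (hx : x ∈ s) : |f x - f 0| ≤ C * |x| := by
  simpa using hs.norm_image_sub_le_of_norm_hasDerivWithin_le
    (fun y hy => (hf y hy).hasDerivWithinAt) hC h0 hx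

theorem Convex.abs_sub_sub_mul_le_mul_sq {s : Set ℝ} (hs : Convex ℝ s) (h0 : 0 ∈ s)
    {f f' f'' : ℝ → ℝ} {M : ℝ} (hf : ∀ x ∈ s, HasDerivAt f (f' x) x)
    (hf' : ∀ x ∈ s, HasDerivAt f' (f'' x) x) (hM : ∀ x ∈ s, |f'' x| ≤ M)
    {x : ℝ} (hx : x ∈ s) : |f x - f 0 - x * f' 0| ≤ M * x ^ 2 := by
  have hseg : uIcc 0 x ⊆ s := hs.ordConnected.uIcc_subset h0 hx
  have hf'x : ∀ y ∈ uIcc 0 x, |f' y - f' 0| ≤ M * |x| := fun y hy =>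
    (hs.abs_sub_le_mul_abs_of_hasDerivAt h0 hf' hM (hseg hy)).trans <|
      mul_le_mul_of_nonneg_left (by simpa using abs_sub_left_of_mem_uIcc hy)
        ((abs_nonneg _).trans (hM 0 h0))
  have hg : ∀ y ∈ uIcc 0 x, HasDerivAt (fun y => f y - y * f' 0) (f' y - f' 0) y :=
    fun y hy => (hf y (hseg hy)).sub (hasDerivAt_mul_const (f' 0))
  have := (convex_uIcc 0 x).abs_sub_le_mul_abs_of_hasDerivAt left_mem_uIcc hg hf'x
    right_mem_uIcc
  simpa [sub_right_comm, mul_assoc, ← sq] using this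

theorem abs_sub_le_mul_pow_four_of_iteratedDeriv_eq_zero {h : ℝ → ℝ} (hh : ContDiff ℝ 4 h)
    (h1 : iteratedDeriv 1 h 0 = 0) (h2 : iteratedDeriv 2 h 0 = 0)
    (h3 : iteratedDeriv 3 h 0 = 0) {r M : ℝ}
    (hM : ∀ v ∈ Icc (-r) r, |iteratedDeriv 4 h v| ≤ M) {u : ℝ} (hu : u ∈ Icc (-r) r) :
    |h u - h 0| ≤ M * u ^ 4 := by
  have hderiv : ∀ n < 4, ∀ x, HasDerivAt (iteratedDeriv n h) (iteratedDeriv (n + 1) h x) x :=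
    fun n hn x => by
      rw [iteratedDeriv_succ]
      exact (hh.differentiable_iteratedDeriv n (by exact_mod_cast hn) x).hasDerivAt
  have hr : 0 ≤ r := (abs_nonneg u).trans (abs_le.2 hu)
  have hsecond : ∀ v ∈ Icc (-r) r, |iteratedDeriv 2 h v| ≤ M * v ^ 2 := fun v hv => by
    simpa [h2, h3] using (convex_Icc (-r) r).abs_sub_sub_mul_le_mul_sq (by simpa using hr)
      (fun x _ => hderiv 2 (by norm_num) x) (fun x _ => hderiv 3 (by norm_num) x) hM hv
  have hsecond_u : ∀ v ∈ Icc (-|u|) |u|, |iteratedDeriv 2 h v| ≤ M * u ^ 2 := fun v hv => by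
    have hvu : |v| ≤ |u| := abs_le.2 hv
    have hvr : v ∈ Icc (-r) r := abs_le.1 (hvu.trans (abs_le.2 hu))
    exact (hsecond v hvr).trans (mul_le_mul_of_nonneg_left (sq_le_sq.2 hvu)
      ((abs_nonneg _).trans (hM 0 ⟨by linarith, hr⟩)))
  have := (convex_Icc (-|u|) |u|).abs_sub_sub_mul_le_mul_sq (by simp)
    (fun x _ => by simpa only [iteratedDeriv_zero] using hderiv 0 (by norm_num) x)
    (fun x _ => hderiv 1 (by norm_num) x) hsecond_u (abs_le.1 le_rfl)
  simpa [h1, mul_assoc, ← pow_add] using this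

theorem abs_rpow_neg_sub_sub_le {c p t : ℝ} (hp : 0 ≤ p) (hc : 1 ≤ c) (ht : t ≤ c - 1) :
    |(c - t) ^ (-p) - c ^ (-p) - t * (p * c ^ (-p - 1))| ≤ p * (p + 1) * t ^ 2 := by
  have hbase : ∀ y ∈ Iic (c - 1), 1 ≤ c - y := fun y hy => by linarith [mem_Iic.1 hy]
  have hderiv : ∀ q, ∀ y ∈ Iic (c - 1),
      HasDerivAt (fun y => (c - y) ^ q) (-(q * (c - y) ^ (q - 1))) y := fun q y hy => by
    convert ((hasDerivAt_id' y).const_sub c).rpow_const (p := q)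
      (Or.inl (by linarith [hbase y hy])) using 1
    ring
  have hf' : ∀ y ∈ Iic (c - 1),
      HasDerivAt (fun y => p * (c - y) ^ (-p - 1)) (p * (p + 1) * (c - y) ^ (-p - 1 - 1)) y :=
    fun y hy => ((hderiv (-p - 1) y hy).const_mul p).congr_deriv (by ring)
  have hM : ∀ y ∈ Iic (c - 1), |p * (p + 1) * (c - y) ^ (-p - 1 - 1)| ≤ p * (p + 1) :=
    fun y hy => by
      rw [abs_of_nonneg (by have := hbase y hy; positivity)]
      exact mul_le_of_le_one_right (by positivity)
        (Real.rpow_le_one_of_one_le_of_nonpos (hbase y hy) (by linarith))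
  have := (convex_Iic (c - 1)).abs_sub_sub_mul_le_mul_sq (by simpa using hc)
    (fun y hy => by simpa using hderiv (-p) y hy) hf' hM ht
  simpa only [sub_zero] using this

theorem abs_div_rpow_sub_sub_le {c p M u v : ℝ} (hp : 0 ≤ p) (hu : u ^ 2 ≤ c - 1)
    (hv : |v - 1| ≤ M * u ^ 4) :
    |v / (c - u ^ 2) ^ p - c ^ (-p) - p * c ^ (-p - 1) * u ^ 2| ≤ (M + p * (p + 1)) * u ^ 4 := by
  have hden : 1 ≤ (c - u ^ 2) ^ p := Real.one_le_rpow (by linarith) hp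
  have hsplit : v / (c - u ^ 2) ^ p - c ^ (-p) - p * c ^ (-p - 1) * u ^ 2 =
      (v - 1) / (c - u ^ 2) ^ p
        + ((c - u ^ 2) ^ (-p) - c ^ (-p) - u ^ 2 * (p * c ^ (-p - 1))) := by
    rw [Real.rpow_neg (x := c - u ^ 2) (by linarith [sq_nonneg u])]
    field_simp
    ring
  have htaylor := abs_rpow_neg_sub_sub_le hp (by linarith [sq_nonneg u]) hu
  rw [hsplit]
  calc _ ≤ |(v - 1) / (c - u ^ 2) ^ p|
          + |(c - u ^ 2) ^ (-p) - c ^ (-p) - u ^ 2 * (p * c ^ (-p - 1))| := abs_add_le _ _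
    _ ≤ M * u ^ 4 + p * (p + 1) * (u ^ 2) ^ 2 := by
        gcongr
        rw [abs_div, abs_of_pos (by linarith : (0:ℝ) < (c - u ^ 2) ^ p)]
        exact (div_le_self (abs_nonneg _) hden).trans hv
    _ = (M + p * (p + 1)) * u ^ 4 := by ring

theorem exists_abs_div_rpow_sub_sub_le {h : ℝ → ℝ} (hh : ContDiff ℝ 4 h) (h0 : h 0 = 1)
    (h1 : iteratedDeriv 1 h 0 = 0) (h2 : iteratedDeriv 2 h 0 = 0)
    (h3 : iteratedDeriv 3 h 0 = 0) {c p : ℝ} (hc : 1 ≤ c) (hp : 0 ≤ p) :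
    ∃ K, ∀ u, |u| ≤ √(c - 1) →
      |h u / (c - u ^ 2) ^ p - c ^ (-p) - p * c ^ (-p - 1) * u ^ 2| ≤ K * u ^ 4 := by
  obtain ⟨M, hM⟩ := isCompact_Icc.exists_bound_of_continuousOn
    ((hh.continuous_iteratedDeriv 4 le_rfl).continuousOn (s := Icc (-√(c - 1)) √(c - 1)))
  refine ⟨M + p * (p + 1), fun u hu => abs_div_rpow_sub_sub_le hp
    ((Real.sq_le (by linarith)).2 (abs_le.1 hu)) ?_⟩
  simpa only [h0] using abs_sub_le_mul_pow_four_of_iteratedDeriv_eq_zero hh h1 h2 h3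
    (fun v hv => hM v hv) (abs_le.1 hu)

theorem continuous_of_ofReal_eq_integral_cexp {ψ g : ℝ → ℝ} (hψ : Integrable ψ)
    (hg : ∀ l : ℝ, (g l : ℂ) = ∫ t : ℝ, Complex.exp (-(l * t) * Complex.I) * (ψ t : ℂ)) :
    Continuous g := by
  have hexp : ∀ l t : ℝ, ‖Complex.exp (-(l * t) * Complex.I)‖ = 1 := fun l t => by
    rw [Complex.norm_exp]; simp
  have hint : Continuous fun l : ℝ => ∫ t : ℝ, Complex.exp (-(l * t) * Complex.I) * (ψ t : ℂ) :=
    continuous_of_dominated (bound := fun t => |ψ t|)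
      (fun l => (Continuous.aestronglyMeasurable (by fun_prop)).mul
        (Complex.continuous_ofReal.comp_aestronglyMeasurable hψ.1))
      (fun l => ae_of_all _ fun t => by rw [norm_mul, hexp, one_mul, Complex.norm_real,
        Real.norm_eq_abs])
      hψ.abs (ae_of_all _ fun t => by fun_prop)
  exact (Complex.continuous_re.comp hint).congr fun l => by
    rw [Function.comp_apply, ← hg, Complex.ofReal_re]

theorem abs_integral_mul_comp_mul_sub_le {w F : ℝ → ℝ} {A r c₀ D K x : ℝ} (hw : Continuous w)
    (hwA : ∀ η ∉ Icc (-A) A, w η = 0) (hF : Measurable F)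
    (hFexp : ∀ u, |u| ≤ r → |F u - c₀ - D * u ^ 2| ≤ K * u ^ 4) (hx : |x| * A ≤ r) :
    |(∫ η, w η * F (x * η)) - c₀ * (∫ η, w η) - D * (∫ η, η ^ 2 * w η) * x ^ 2|
      ≤ K * (∫ η, η ^ 4 * |w η|) * x ^ 4 := by
  have hwc : HasCompactSupport w := .intro isCompact_Icc hwA
  have hmoment : ∀ n : ℕ, Integrable fun η => η ^ n * w η := fun n =>
    ((continuous_pow n).mul hw).integrable_of_hasCompactSupport hwc.mul_left
  have hmoment_abs : Integrable fun η => η ^ 4 * |w η| :=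
    ((continuous_pow 4).mul hw.abs).integrable_of_hasCompactSupport hwc.abs.mul_left
  set E : ℝ → ℝ := fun η => w η * (F (x * η) - c₀ - D * (x * η) ^ 2)
  have hE : ∀ η, ‖E η‖ ≤ K * x ^ 4 * (η ^ 4 * |w η|) := fun η => by
    by_cases hη : η ∈ Icc (-A) A
    · have hxη : |x * η| ≤ r := by
        rw [abs_mul]
        exact (mul_le_mul_of_nonneg_left (abs_le.2 hη) (abs_nonneg x)).trans hx
      calc ‖E η‖ = |w η| * |F (x * η) - c₀ - D * (x * η) ^ 2| := abs_mul _ _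
        _ ≤ |w η| * (K * (x * η) ^ 4) := by gcongr; exact hFexp _ hxη
        _ = K * x ^ 4 * (η ^ 4 * |w η|) := by ring
    · simp [E, hwA η hη]
  have hEint : Integrable E :=
    (hmoment_abs.const_mul _).mono' (by fun_prop) (ae_of_all _ hE)
  have hw0 : Integrable w := by simpa using hmoment 0
  have hI : ∫ η, w η * F (x * η)
      = (∫ η, E η) + (c₀ * (∫ η, w η) + D * x ^ 2 * ∫ η, η ^ 2 * w η) := by
    calc ∫ η, w η * F (x * η)
        = ∫ η, E η + (c₀ * w η + D * x ^ 2 * (η ^ 2 * w η)) := by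
          congr 1; funext η; simp only [E]; ring
      _ = _ := by
          have hrest : Integrable fun η => c₀ * w η + D * x ^ 2 * (η ^ 2 * w η) :=
            (hw0.const_mul _).add ((hmoment 2).const_mul _)
          rw [integral_add hEint hrest,
            integral_add (hw0.const_mul _) ((hmoment 2).const_mul _), integral_const_mul,
            integral_const_mul]
  calc _ = ‖∫ η, E η‖ := by
        rw [hI, Real.norm_eq_abs]; ring_nf
    _ ≤ ∫ η, K * x ^ 4 * (η ^ 4 * |w η|) :=
        norm_integral_le_of_norm_le (hmoment_abs.const_mul _) (ae_of_all _ hE)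
    _ = _ := by rw [integral_const_mul]; ring

theorem abs_slope_sq_sub_le {I₁ I₂ x₁ x₂ c₀ D K q : ℝ}
    (h₁ : |I₁ - c₀ - D * x₁ ^ 2| ≤ K * x₁ ^ 4) (h₂ : |I₂ - c₀ - D * x₂ ^ 2| ≤ K * x₂ ^ 4)
    (hx₁ : x₁ ≠ 0) (hx : x₂ ^ 2 ≤ q * x₁ ^ 2) (hq : q < 1) :
    |(I₁ - I₂) / (x₁ ^ 2 - x₂ ^ 2) - D| ≤ 2 * K / (1 - q) * x₁ ^ 2 := by
  have hx₁2 : 0 < x₁ ^ 2 := by positivity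
  have hK : 0 ≤ K := nonneg_of_mul_nonneg_left ((abs_nonneg _).trans h₁) (by positivity)
  have hgap : (1 - q) * x₁ ^ 2 ≤ x₁ ^ 2 - x₂ ^ 2 := by linarith
  have hgap_pos : 0 < (1 - q) * x₁ ^ 2 := mul_pos (by linarith) hx₁2
  have hx₂₁ : x₂ ^ 4 ≤ x₁ ^ 4 := by
    have : x₂ ^ 2 ≤ x₁ ^ 2 := by nlinarith
    nlinarith [sq_nonneg x₂]
  have hsplit : (I₁ - I₂) / (x₁ ^ 2 - x₂ ^ 2) - D
      = ((I₁ - c₀ - D * x₁ ^ 2) - (I₂ - c₀ - D * x₂ ^ 2)) / (x₁ ^ 2 - x₂ ^ 2) := by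
    field_simp [(hgap_pos.trans_le hgap).ne']
    ring
  rw [hsplit, abs_div, abs_of_pos (hgap_pos.trans_le hgap)]
  calc _ ≤ (K * x₁ ^ 4 + K * x₁ ^ 4) / ((1 - q) * x₁ ^ 2) := by
        gcongr
        exact (abs_sub _ _).trans (add_le_add h₁ (h₂.trans (by gcongr)))
    _ = 2 * K / (1 - q) * x₁ ^ 2 := by field_simp; ring

theorem tendsto_sqrt_mul_slope_sq_sub {I : ℝ → ℝ} {c₀ D K r ρ : ℝ} {a m : ℕ → ℝ} {j₀ : ℕ}
    (hr : 0 < r) (hI : ∀ x, 0 < x → x ≤ r → |I x - c₀ - D * x ^ 2| ≤ K * x ^ 4)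
    (hρ : 1 < ρ) (hapos : ∀ j, 0 < a j) (haTop : Tendsto a atTop atTop)
    (hratio : ∀ j, j₀ ≤ j → ρ ≤ a (j + 1) / a j)
    (hrate : Tendsto (fun j => m j * a j ^ (-(4 : ℝ))) atTop (𝓝 0)) :
    Tendsto (fun j => √(m j) * ((I (a (j + 1))⁻¹ - I (a (j + 2))⁻¹) /
      ((a (j + 1) ^ 2)⁻¹ - (a (j + 2) ^ 2)⁻¹) - D)) atTop (𝓝 0) := by
  set C := 2 * K / (1 - (ρ⁻¹) ^ 2)
  have hbound : Tendsto (fun j => C * √(m j * a j ^ (-(4 : ℝ)))) atTop (𝓝 0) := by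
    simpa using hrate.sqrt.const_mul C
  refine squeeze_zero_norm' ?_ hbound
  filter_upwards [haTop.eventually_ge_atTop r⁻¹, eventually_ge_atTop j₀] with j hjr hj
  have hgrow : ∀ k, j₀ ≤ k → (a (k + 1))⁻¹ ≤ ρ⁻¹ * (a k)⁻¹ := fun k hk => by
    have := hratio k hk
    rw [le_div_iff₀ (hapos k)] at this
    rw [← mul_inv, inv_le_inv₀ (hapos _) (by nlinarith [hapos k])]
    exact this
  have hρinv : ρ⁻¹ < 1 := inv_lt_one_of_one_lt₀ hρ
  have hρinv0 : 0 < ρ⁻¹ := inv_pos.2 (by linarith)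
  set y := (a j)⁻¹
  set x₁ := (a (j + 1))⁻¹
  set x₂ := (a (j + 2))⁻¹
  have hy : y ≤ r := inv_le_of_inv_le₀ hr hjr
  have hx₁y : x₁ ≤ y :=
    (hgrow j hj).trans (mul_le_of_le_one_left (inv_pos.2 (hapos j)).le hρinv.le)
  have hx₂x₁ : x₂ ≤ ρ⁻¹ * x₁ := hgrow (j + 1) (by omega)
  have hx₁ : 0 < x₁ := inv_pos.2 (hapos _)
  have hx₂ : 0 < x₂ := inv_pos.2 (hapos _)
  have hslope := abs_slope_sq_sub_le (hI x₁ hx₁ (hx₁y.trans hy))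
    (hI x₂ hx₂ ((hx₂x₁.trans (mul_le_of_le_one_left hx₁.le hρinv.le)).trans (hx₁y.trans hy)))
    hx₁.ne' (by rw [← mul_pow]; gcongr) (pow_lt_one₀ hρinv0.le hρinv two_ne_zero)
  have hC : 0 ≤ C := nonneg_of_mul_nonneg_left ((abs_nonneg _).trans hslope) (by positivity)
  have hsqrt : √(m j * a j ^ (-(4 : ℝ))) = √(m j) * y ^ 2 := by
    rw [Real.sqrt_mul' _ (Real.rpow_nonneg (hapos j).le _), Real.rpow_neg (hapos j).le,
      show a j ^ (4 : ℝ) = a j ^ 4 by norm_cast, ← Real.sqrt_sq (sq_nonneg y), ← pow_mul, inv_pow]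
  rw [Real.norm_eq_abs, abs_mul, abs_of_nonneg (Real.sqrt_nonneg _), ← inv_pow, ← inv_pow, hsqrt]
  calc √(m j) * |(I x₁ - I x₂) / (x₁ ^ 2 - x₂ ^ 2) - D| ≤ √(m j) * (C * x₁ ^ 2) := by gcongr
    _ ≤ √(m j) * (C * y ^ 2) := by gcongr
    _ = C * (√(m j) * y ^ 2) := by ring

theorem increment_bias_negligible_general
    (A B s₀ α : ℝ) (hA : 0 < A) (hB : 0 < B) (hBA : B < A)
    (hs₀ : 1 < s₀) (hα : α ∈ Set.Ioo (0:ℝ) (1/2))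
    (h : ℝ → ℝ) (hSmooth : ContDiff ℝ 4 h)
    (h0 : h 0 = 1) (hder0 : ∀ i ∈ Finset.Icc 1 4, iteratedDeriv i h 0 = 0)
    (ψ : ℝ → ℝ) (hψ : Integrable ψ)
    (psiHat : ℝ → ℝ)
    (hFour : ∀ l : ℝ, (psiHat l : ℂ) =
      ∫ t : ℝ, Complex.exp (-(l * t) * Complex.I) * (ψ t : ℂ))
    (hSupp : ∀ l : ℝ, psiHat l ≠ 0 → l ∈ Set.Icc (-A) A)
    (a : ℕ → ℝ) (hapos : ∀ j, 0 < a j)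
    (haTop : Tendsto a atTop atTop)
    (m : ℕ → ℕ)
    (j₀ : ℕ) (hratio : ∀ j, j₀ ≤ j → A / B ≤ a (j + 1) / a j)
    (hrate : Tendsto (fun j => (m j : ℝ) * (a j) ^ (-(4 : ℝ))) atTop (𝓝 0)) :
    Tendsto (fun j => Real.sqrt (m j) *
        (((∫ η : ℝ, psiHat η ^ 2 * h ((a (j + 1))⁻¹ * η) /
              (s₀ ^ 2 - ((a (j + 1))⁻¹) ^ 2 * η ^ 2) ^ (2 * α)) -
            ∫ η : ℝ, psiHat η ^ 2 * h ((a (j + 2))⁻¹ * η) /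
              (s₀ ^ 2 - ((a (j + 2))⁻¹) ^ 2 * η ^ 2) ^ (2 * α)) /
            (((a (j + 1)) ^ 2)⁻¹ - ((a (j + 2)) ^ 2)⁻¹) -
          2 * α * s₀ ^ (-(4 : ℝ) * α - 2) * ∫ η : ℝ, η ^ 2 * psiHat η ^ 2))
      atTop (𝓝 0) := by
  have hs₀c : 1 ≤ s₀ ^ 2 := by nlinarith
  obtain ⟨K, hK⟩ := exists_abs_div_rpow_sub_sub_le hSmooth h0 (hder0 1 (by decide))
    (hder0 2 (by decide)) (hder0 3 (by decide)) hs₀c (p := 2 * α) (by linarith [hα.1])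
  have hs₀rpow : (s₀ ^ 2) ^ (-(2 * α) - 1) = s₀ ^ (-(4 : ℝ) * α - 2) := by
    rw [← Real.rpow_natCast, ← Real.rpow_mul (by linarith)]
    ring_nf
  rw [hs₀rpow] at hK
  have hr : 0 < √(s₀ ^ 2 - 1) := Real.sqrt_pos.2 (by nlinarith)
  have hF : Measurable fun u => h u / (s₀ ^ 2 - u ^ 2) ^ (2 * α) := by
    have := hSmooth.continuous.measurable
    fun_prop
  refine tendsto_sqrt_mul_slope_sq_sub
    (I := fun x => ∫ η, psiHat η ^ 2 * h (x * η) / (s₀ ^ 2 - x ^ 2 * η ^ 2) ^ (2 * α))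
    (c₀ := (s₀ ^ 2) ^ (-(2 * α)) * ∫ η, psiHat η ^ 2)
    (K := K * ∫ η, η ^ 4 * |psiHat η ^ 2|) (m := fun j => (m j : ℝ))
    (div_pos hr hA) (fun x hx hxr => ?_) ((one_lt_div hB).2 hBA) hapos haTop hratio hrate
  have hintegrand : (fun η => psiHat η ^ 2 * h (x * η) / (s₀ ^ 2 - x ^ 2 * η ^ 2) ^ (2 * α))
      = fun η => psiHat η ^ 2 * (h (x * η) / (s₀ ^ 2 - (x * η) ^ 2) ^ (2 * α)) := by
    funext η
    rw [mul_pow, mul_div_assoc]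
  rw [hintegrand]
  exact abs_integral_mul_comp_mul_sub_le
    ((continuous_of_ofReal_eq_integral_cexp hψ hFour).pow 2)
    (fun η hη => by simpa using mt (hSupp η) hη) hF hK
    (by rw [abs_of_pos hx]; exact (le_div_iff₀ hA).1 hxr)

/-- If `a_{j+1}/a_j ≥ A/B > 1` for `j ≥ j₀` and `m_j a_j^{−4} → 0`, then
`√m_j ((I₀(a_{j+1}⁻¹) − I₀(a_{j+2}⁻¹))/(a_{j+1}^{−2} − a_{j+2}^{−2})
   − 2α s₀^{−4α−2} ∫ η²|ψ̂(η)|² dη) → 0`,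
where `I₀(x) = ∫ |ψ̂(η)|² h(xη)/(s₀² − x²η²)^{2α} dη`. -/
theorem increment_bias_negligible
    (A B s₀ α : ℝ) (hA : 0 < A) (hB : 0 < B) (hBA : B < A)
    (hs₀ : 1 < s₀) (hα : α ∈ Set.Ioo (0:ℝ) (1/2))
    (h : ℝ → ℝ) (hEven : ∀ x, h (-x) = h x) (hNonneg : ∀ x, 0 ≤ h x)
    (hBdd : ∃ C : ℝ, ∀ x, h x ≤ C) (hSmooth : ContDiff ℝ 4 h)
    (h0 : h 0 = 1) (hder0 : ∀ i ∈ Finset.Icc 1 4, iteratedDeriv i h 0 = 0)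
    (ψ : ℝ → ℝ) (hψ : Integrable ψ)
    (psiHat : ℝ → ℝ)
    (hFour : ∀ l : ℝ, (psiHat l : ℂ) =
      ∫ t : ℝ, Complex.exp (-(l * t) * Complex.I) * (ψ t : ℂ))
    (hSupp : ∀ l : ℝ, psiHat l ≠ 0 → l ∈ Set.Icc (-A) A)
    (hBV : BoundedVariationOn psiHat (Set.Icc (-A) A))
    (a : ℕ → ℝ) (hapos : ∀ j, 0 < a j) (haMono : StrictMono a)
    (haTop : Tendsto a atTop atTop)
    (m : ℕ → ℕ) (hmpos : ∀ j, 0 < m j) (hmMono : Monotone m)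
    (hmTop : Tendsto m atTop atTop)
    (j₀ : ℕ) (hratio : ∀ j, j₀ ≤ j → A / B ≤ a (j + 1) / a j)
    (hrate : Tendsto (fun j => (m j : ℝ) * (a j) ^ (-(4 : ℝ))) atTop (𝓝 0)) :
    Tendsto (fun j => Real.sqrt (m j) *
        (((∫ η : ℝ, psiHat η ^ 2 * h ((a (j + 1))⁻¹ * η) /
              (s₀ ^ 2 - ((a (j + 1))⁻¹) ^ 2 * η ^ 2) ^ (2 * α)) -
            ∫ η : ℝ, psiHat η ^ 2 * h ((a (j + 2))⁻¹ * η) /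
              (s₀ ^ 2 - ((a (j + 2))⁻¹) ^ 2 * η ^ 2) ^ (2 * α)) /
            (((a (j + 1)) ^ 2)⁻¹ - ((a (j + 2)) ^ 2)⁻¹) -
          2 * α * s₀ ^ (-(4 : ℝ) * α - 2) * ∫ η : ℝ, η ^ 2 * psiHat η ^ 2))
      atTop (𝓝 0) :=
  increment_bias_negligible_general A B s₀ α hA hB hBA hs₀ hα h hSmooth h0 hder0 ψ hψ psiHat hFour
    hSupp a hapos haTop m j₀ hratio hrate
end

section
/- The map Φ : (1,∞) × (0,1/2) → ℝ², Φ(s,α) := (s^{−4α}, α s^{−4α−2}), is a continuous bijection onto the open set D := {(y₁,y₂) ∈ ℝ² : 0 < y₁ < 1 and 0 < y₂ < y₁²/2}, and its inverse Φ^{−1} : D → (1,∞) × (0,1/2) is continuous. -/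
/-- The parameter map `Φ(s,α) = (s^{−4α}, α s^{−4α−2})`. -/
noncomputable def Phi (p : ℝ × ℝ) : ℝ × ℝ :=
  (p.1 ^ (-(4 : ℝ) * p.2), p.2 * p.1 ^ (-(4 : ℝ) * p.2 - 2))

/-- The feasible region `D = {(y₁,y₂) : 0 < y₁ < 1, 0 < y₂ < y₁²/2}`. -/
def Dfeas : Set (ℝ × ℝ) := {y | 0 < y.1 ∧ y.1 < 1 ∧ 0 < y.2 ∧ y.2 < y.1 ^ 2 / 2}

/-- The parameter space `(1,∞) × (0,1/2)`. -/
def Sparam : Set (ℝ × ℝ) := Set.Ioi (1 : ℝ) ×ˢ Set.Ioo (0 : ℝ) (1 / 2)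


/-!
With `t = s²`, the point `(y₁, y₂) = Φ(s, α)` satisfies `y₂ = α y₁ / t` and `log y₁ = -2α log t`,
hence `t log t = -y₁ log y₁ / (2 y₂)`. Since `t ↦ t log t` is an increasing homeomorphism of
`(1, ∞)` onto `(0, ∞)`, this determines `t`, and then `s = √t` and `α = y₂ t / y₁`, continuously
in `y`. By monotonicity of `t log t`, the constraint `α < 1/2`, i.e. `t < y₁ / (2 y₂)`, becomes
`-log y₁ < log (y₁ / (2 y₂))`, i.e. `y₂ < y₁² / 2`.
-/

open Real Set Filter

/-- `t ↦ t log t` on `[1, ∞)`; the affine extension to the left only serves to make it an order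
isomorphism of `ℝ`. -/
noncomputable def mulLogExt (t : ℝ) : ℝ := if 1 ≤ t then t * log t else t - 1

lemma mulLogExt_of_one_le {t : ℝ} (ht : 1 ≤ t) : mulLogExt t = t * log t := if_pos ht

lemma strictMono_mulLogExt : StrictMono mulLogExt := by
  intro a b hab
  unfold mulLogExt
  split_ifs with ha hb hb
  · calc a * log a ≤ b * log a := mul_le_mul_of_nonneg_right hab.le (log_nonneg ha)
      _ < b * log b := mul_lt_mul_of_pos_left (log_lt_log (by linarith) hab) (by linarith)
  · exact absurd (ha.trans hab.le) hb
  · nlinarith [log_nonneg hb]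
  · linarith

lemma continuous_mulLogExt : Continuous mulLogExt :=
  continuous_mul_log.if_le (by fun_prop) continuous_const continuous_id fun t ht => by
    simp [← ht]

lemma sub_one_le_mulLogExt (t : ℝ) : t - 1 ≤ mulLogExt t := by
  unfold mulLogExt
  split_ifs with ht
  · have := one_sub_inv_le_log_of_pos (zero_lt_one.trans_le ht)
    calc t - 1 = t * (1 - t⁻¹) := by field_simp
      _ ≤ t * log t := by gcongr
  · rfl

lemma surjective_mulLogExt : Function.Surjective mulLogExt := by
  refine continuous_mulLogExt.surjective ?_ ?_
  · exact tendsto_atTop_mono sub_one_le_mulLogExt (tendsto_atTop_add_const_right _ _ tendsto_id)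
  · refine (tendsto_atBot_add_const_right _ (-1) tendsto_id).congr' ?_
    filter_upwards [eventually_lt_atBot 1] with t ht
    simp [mulLogExt, not_le.mpr ht, sub_eq_add_neg]

noncomputable def mulLogOrderIso : ℝ ≃o ℝ :=
  strictMono_mulLogExt.orderIsoOfSurjective _ surjective_mulLogExt

namespace mulLogOrderIso

lemma apply_of_one_le {t : ℝ} (ht : 1 ≤ t) : mulLogOrderIso t = t * log t :=
  mulLogExt_of_one_le ht

lemma one_lt_symm_apply {c : ℝ} (hc : 0 < c) : 1 < mulLogOrderIso.symm c := by
  rw [OrderIso.lt_symm_apply, apply_of_one_le le_rfl, log_one, mul_zero]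
  exact hc

lemma symm_apply_mul_log {c : ℝ} (hc : 0 < c) :
    mulLogOrderIso.symm c * log (mulLogOrderIso.symm c) = c := by
  rw [← apply_of_one_le (one_lt_symm_apply hc).le, OrderIso.apply_symm_apply]

lemma symm_apply_mul_log_self {t : ℝ} (ht : 1 ≤ t) : mulLogOrderIso.symm (t * log t) = t := by
  rw [← apply_of_one_le ht, OrderIso.symm_apply_apply]

lemma symm_apply_lt_iff {c u : ℝ} (hu : 1 ≤ u) : mulLogOrderIso.symm c < u ↔ c < u * log u := by
  rw [OrderIso.symm_apply_lt, apply_of_one_le hu]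

end mulLogOrderIso

lemma mem_Sparam {p : ℝ × ℝ} : p ∈ Sparam ↔ 1 < p.1 ∧ 0 < p.2 ∧ p.2 < 1 / 2 := by
  simp [Sparam]

lemma isOpen_Dfeas : IsOpen Dfeas :=
  (isOpen_lt continuous_const continuous_fst).inter <|
    (isOpen_lt continuous_fst continuous_const).inter <|
      (isOpen_lt continuous_const continuous_snd).inter (isOpen_lt continuous_snd (by fun_prop))

lemma continuousOn_Phi : ContinuousOn Phi Sparam := by
  have hne : ∀ p ∈ Sparam, p.1 ≠ 0 := fun p hp => (zero_lt_one.trans hp.1).ne'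
  exact (continuousOn_fst.rpow (by fun_prop) fun p hp => .inl (hne p hp)).prodMk
    (continuousOn_snd.mul (continuousOn_fst.rpow (by fun_prop) fun p hp => .inl (hne p hp)))

lemma Phi_eq {s : ℝ} (hs : 0 < s) (α : ℝ) :
    Phi (s, α) = (s ^ (-4 * α), α * s ^ (-4 * α) / s ^ 2) := by
  simp only [Phi, rpow_sub hs, rpow_two, mul_div_assoc]

lemma mapsTo_Phi : MapsTo Phi Sparam Dfeas := by
  rintro ⟨s, α⟩ hp
  obtain ⟨hs, hα, hα'⟩ := mem_Sparam.mp hp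
  have hs0 : 0 < s := zero_lt_one.trans hs
  set y₁ := s ^ (-4 * α)
  have hy₁ : 0 < y₁ := rpow_pos_of_pos hs0 _
  have hy₁s : 1 < y₁ * s ^ 2 := by
    rw [← rpow_two, ← rpow_add hs0]
    exact one_lt_rpow hs (by linarith)
  rw [Phi_eq hs0]
  refine ⟨hy₁, rpow_lt_one_of_one_lt_of_neg hs (by linarith), by positivity, ?_⟩
  rw [div_lt_iff₀ (by positivity)]
  nlinarith

/-- The square `t = s²` of the first coordinate of `Φ⁻¹ y`. -/
noncomputable def PhiInvSq (y : ℝ × ℝ) : ℝ := mulLogOrderIso.symm (-(y.1 * log y.1) / (2 * y.2))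

noncomputable def PhiInv (y : ℝ × ℝ) : ℝ × ℝ := (√(PhiInvSq y), y.2 * PhiInvSq y / y.1)

lemma continuousOn_PhiInv : ContinuousOn PhiInv Dfeas := by
  have hc : ContinuousOn (fun y : ℝ × ℝ => -(y.1 * log y.1) / (2 * y.2)) Dfeas :=
    (continuous_mul_log.comp continuous_fst).neg.continuousOn.div (by fun_prop)
      fun y hy => by linarith [hy.2.2.1]
  have ht : ContinuousOn PhiInvSq Dfeas := mulLogOrderIso.symm.continuous.comp_continuousOn hc
  exact (continuous_sqrt.comp_continuousOn ht).prodMk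
    ((continuousOn_snd.mul ht).div continuousOn_fst fun y hy => hy.1.ne')

lemma neg_mul_log_div_pos_of_mem_Dfeas {y : ℝ × ℝ} (hy : y ∈ Dfeas) :
    0 < -(y.1 * log y.1) / (2 * y.2) := by
  obtain ⟨h₁, h₁', h₂, -⟩ := hy
  have := log_neg h₁ h₁'
  exact div_pos (by nlinarith) (by linarith)

lemma one_lt_PhiInvSq {y : ℝ × ℝ} (hy : y ∈ Dfeas) : 1 < PhiInvSq y :=
  mulLogOrderIso.one_lt_symm_apply (neg_mul_log_div_pos_of_mem_Dfeas hy)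

lemma PhiInvSq_mul_log {y : ℝ × ℝ} (hy : y ∈ Dfeas) :
    PhiInvSq y * log (PhiInvSq y) = -(y.1 * log y.1) / (2 * y.2) :=
  mulLogOrderIso.symm_apply_mul_log (neg_mul_log_div_pos_of_mem_Dfeas hy)

lemma PhiInvSq_lt {y : ℝ × ℝ} (hy : y ∈ Dfeas) : PhiInvSq y < y.1 / (2 * y.2) := by
  obtain ⟨h₁, h₁', h₂, h₂'⟩ := hy
  have hu : y.1⁻¹ < y.1 / (2 * y.2) := by
    rw [lt_div_iff₀ (by positivity), inv_mul_eq_div, div_lt_iff₀ h₁]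
    linarith
  have hu1 : 1 < y.1 / (2 * y.2) := (one_lt_inv₀ h₁).mpr h₁' |>.trans hu
  rw [PhiInvSq, mulLogOrderIso.symm_apply_lt_iff hu1.le]
  have hlog : -log y.1 < log (y.1 / (2 * y.2)) := by
    simpa [log_inv] using log_lt_log (by positivity) hu
  calc -(y.1 * log y.1) / (2 * y.2) = y.1 / (2 * y.2) * -log y.1 := by ring
    _ < y.1 / (2 * y.2) * log (y.1 / (2 * y.2)) := by gcongr

lemma mapsTo_PhiInv : MapsTo PhiInv Dfeas Sparam := by
  intro y hy
  have ht := one_lt_PhiInvSq hy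
  have htu := PhiInvSq_lt hy
  obtain ⟨h₁, -, h₂, -⟩ := hy
  refine mem_Sparam.mpr ⟨?_, by unfold PhiInv; positivity, ?_⟩
  · show 1 < √(PhiInvSq y)
    rwa [lt_sqrt zero_le_one, one_pow]
  · rw [lt_div_iff₀ (by positivity)] at htu
    show y.2 * PhiInvSq y / y.1 < 1 / 2
    rw [div_lt_iff₀ h₁]
    linarith

lemma PhiInv_Phi : LeftInvOn PhiInv Phi Sparam := by
  rintro ⟨s, α⟩ hp
  obtain ⟨hs, hα, -⟩ := mem_Sparam.mp hp
  have hs0 : 0 < s := zero_lt_one.trans hs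
  have hy₁ : 0 < s ^ (-4 * α) := rpow_pos_of_pos hs0 _
  rw [Phi_eq hs0]
  have hsq : PhiInvSq (s ^ (-4 * α), α * s ^ (-4 * α) / s ^ 2) = s ^ 2 := by
    unfold PhiInvSq
    convert mulLogOrderIso.symm_apply_mul_log_self (one_le_pow₀ hs.le) using 2
    simp only [log_rpow hs0, log_pow]
    field_simp
    ring
  simp only [PhiInv, hsq, sqrt_sq hs0.le]
  field_simp

lemma Phi_PhiInv : RightInvOn PhiInv Phi Dfeas := by
  intro y hy
  have ht := zero_lt_one.trans (one_lt_PhiInvSq hy)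
  have htlog := PhiInvSq_mul_log hy
  obtain ⟨h₁, -, h₂, -⟩ := hy
  set t := PhiInvSq y
  have hfst : √t ^ (-4 * (y.2 * t / y.1)) = y.1 := by
    rw [sqrt_eq_rpow, ← rpow_mul ht.le, rpow_def_of_pos ht]
    refine (congrArg exp ?_).trans (exp_log h₁)
    calc log t * (1 / 2 * (-4 * (y.2 * t / y.1))) = -2 * y.2 / y.1 * (t * log t) := by ring
      _ = log y.1 := by rw [htlog]; field_simp
  show Phi (√t, y.2 * t / y.1) = y
  rw [Phi_eq (sqrt_pos.mpr ht), hfst, sq_sqrt ht.le]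
  ext <;> field_simp

/-- `Φ` is a continuous bijection from `(1,∞) × (0,1/2)` onto the open set `D`,
with continuous inverse. -/
theorem Phi_homeomorphism :
    IsOpen Dfeas ∧
    ContinuousOn Phi Sparam ∧
    Set.BijOn Phi Sparam Dfeas ∧
    ∃ g : ℝ × ℝ → ℝ × ℝ, ContinuousOn g Dfeas ∧
      (∀ p ∈ Sparam, g (Phi p) = p) ∧ (∀ y ∈ Dfeas, Phi (g y) = y) :=
  ⟨isOpen_Dfeas, continuousOn_Phi, InvOn.bijOn ⟨PhiInv_Phi, Phi_PhiInv⟩ mapsTo_Phi mapsTo_PhiInv,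
    PhiInv, continuousOn_PhiInv, PhiInv_Phi, Phi_PhiInv⟩
end
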